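/- Let L and M be semistable Euclidean lattices, normalized to be unimodular. Then every rank-1 sublattice S of L ⊗ M satisfies μ(S) ≤ 0; equivalently, every nonzero vector α ∈ L ⊗ M has norm |α| ≥ 1. More precisely, |α| ≥ √(l(α)) where l(α) is the minimal number of decomposable tensors needed to write α. -/

import Mathlib

open scoped RealInnerProductSpace

/-- The Gram matrix of a finite family of vectors. -/
noncomputable def gramMatrix {E : Type*} [NormedAddCommGroup E] [InnerProductSpace ℝ E]
    {ι : Type*} [Fintype ι] (v : ι → E) : Matrix ι ι ℝ :=
  Matrix.of fun i j => ⟪v i, v j⟫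

/-- A unimodular lattice `L` is semistable iff every family of `ℝ`-linearly independent
lattice vectors spans a parallelepiped of volume at least `1`, i.e. has Gram
determinant at least `1`. -/
def IsSemistableUnimodular {E : Type*} [NormedAddCommGroup E] [InnerProductSpace ℝ E]
    (L : Submodule ℤ E) : Prop :=
  ∀ (k : ℕ) (v : Fin k → E), (∀ i, v i ∈ L) → LinearIndependent ℝ v →
    1 ≤ (gramMatrix v).det

open scoped Matrix

lemma gram_posSemidef {E : Type*} [NormedAddCommGroup E] [InnerProductSpace ℝ E]
    {ι : Type*} [Fintype ι] (v : ι → E) : (gramMatrix v).PosSemidef := by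
  refine Matrix.PosSemidef.of_dotProduct_mulVec_nonneg ?_ ?_
  · ext i j
    simpa [gramMatrix, Matrix.conjTranspose_apply] using real_inner_comm (v i) (v j)
  · intro c
    have h : dotProduct (star c) ((gramMatrix v).mulVec c)
        = ⟪∑ i, c i • v i, ∑ i, c i • v i⟫ := by
      simp only [dotProduct, Matrix.mulVec, dotProduct, gramMatrix,
        Matrix.of_apply, Pi.star_apply, star_trivial, sum_inner, inner_sum,
        real_inner_smul_left, real_inner_smul_right, Finset.mul_sum]
      exact Finset.sum_congr rfl fun i _ => Finset.sum_congr rfl fun j _ => by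
        rw [real_inner_comm (v j) (v i)]; ring
    rw [h]
    exact real_inner_self_nonneg

lemma trace_eq_sum_eig {l : ℕ} {C : Matrix (Fin l) (Fin l) ℝ} (hC : C.IsHermitian) :
    C.trace = ∑ i, hC.eigenvalues i := by
  classical
  rw [hC.trace_eq_sum_eigenvalues]
  simp

lemma aux_le_trace {l : ℕ} (hl : 0 < l) {C : Matrix (Fin l) (Fin l) ℝ}
    (hC : C.PosSemidef) (hdet : 1 ≤ C.det) : (l : ℝ) ≤ C.trace := by
  classical
  have hμ0 : ∀ i, 0 ≤ hC.1.eigenvalues i := hC.eigenvalues_nonneg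
  have hlpos : (0:ℝ) < l := by exact_mod_cast hl
  have hprod : (1:ℝ) ≤ ∏ i, hC.1.eigenvalues i := by
    have h := hC.1.det_eq_prod_eigenvalues
    rw [h] at hdet
    simpa using hdet
  have hgm := Real.geom_mean_le_arith_mean_weighted Finset.univ (fun _ => (l:ℝ)⁻¹)
    hC.1.eigenvalues (fun _ _ => by positivity)
    (by simp [Finset.card_univ]; field_simp) (fun i _ => hμ0 i)
  have h1 : (1:ℝ) ≤ ∏ i, hC.1.eigenvalues i ^ ((l:ℝ)⁻¹) := by
    rw [Real.finset_prod_rpow _ _ (fun i _ => hμ0 i)]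
    calc (1:ℝ) = 1 ^ ((l:ℝ)⁻¹) := (Real.one_rpow _).symm
    _ ≤ _ := Real.rpow_le_rpow zero_le_one hprod (by positivity)
  have h2 : (1:ℝ) ≤ (l:ℝ)⁻¹ * ∑ i, hC.1.eigenvalues i := by
    rw [Finset.mul_sum]
    exact le_trans h1 hgm
  rw [trace_eq_sum_eig hC.1]
  calc (l:ℝ) = l * 1 := (mul_one _).symm
  _ ≤ l * ((l:ℝ)⁻¹ * ∑ i, hC.1.eigenvalues i) := by
      exact mul_le_mul_of_nonneg_left h2 (le_of_lt hlpos)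
  _ = ∑ i, hC.1.eigenvalues i := by
      rw [← mul_assoc, mul_inv_cancel₀ (ne_of_gt hlpos), one_mul]

open Matrix in
lemma exists_int_matrix {n m : ℕ} {E F G : Type*} [AddCommGroup E] [Module ℝ E]
    [AddCommGroup F] [Module ℝ F] [AddCommGroup G] [Module ℝ G]
    (t : E →ₗ[ℝ] F →ₗ[ℝ] G) (bL : Fin n → E) (bM : Fin m → F) {α : G}
    (hα : α ∈ Submodule.span ℤ (Set.image2 (fun x y => t x y)
        ((Submodule.span ℤ (Set.range bL) : Submodule ℤ E) : Set E)
        ((Submodule.span ℤ (Set.range bM) : Submodule ℤ F) : Set F))) :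
    ∃ N : Matrix (Fin n) (Fin m) ℤ, α = ∑ i, ∑ j, ((N i j : ℝ)) • t (bL i) (bM j) := by
  induction hα using Submodule.span_induction with
  | mem a ha =>
    obtain ⟨x, hx, y, hy, rfl⟩ := ha
    obtain ⟨p, hp⟩ := (Submodule.mem_span_range_iff_exists_fun ℤ).mp hx
    obtain ⟨q, hq⟩ := (Submodule.mem_span_range_iff_exists_fun ℤ).mp hy
    refine ⟨Matrix.of fun i j => p i * q j, ?_⟩
    simp only []
    rw [← hp, ← hq]
    simp only [map_sum, map_zsmul, LinearMap.sum_apply, LinearMap.smul_apply, Finset.smul_sum]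
    rw [Finset.sum_comm]
    refine Finset.sum_congr rfl fun i _ => Finset.sum_congr rfl fun j _ => ?_
    rw [Matrix.of_apply, Int.cast_mul, mul_smul]
    rw [show ((p i : ℝ)) • ((q j : ℝ)) • (t (bL i)) (bM j)
        = p i • q j • (t (bL i)) (bM j) by
      rw [Int.cast_smul_eq_zsmul, Int.cast_smul_eq_zsmul]]
    exact smul_comm _ _ _
  | zero => exact ⟨0, by simp⟩
  | add a b _ _ iha ihb =>
    obtain ⟨N₁, h₁⟩ := iha
    obtain ⟨N₂, h₂⟩ := ihb
    refine ⟨N₁ + N₂, ?_⟩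
    rw [h₁, h₂, ← Finset.sum_add_distrib]
    refine Finset.sum_congr rfl fun i _ => ?_
    rw [← Finset.sum_add_distrib]
    refine Finset.sum_congr rfl fun j _ => ?_
    rw [← add_smul]
    norm_num [Matrix.add_apply]
  | smul r a _ ih =>
    obtain ⟨N, h⟩ := ih
    refine ⟨r • N, ?_⟩
    rw [h, Finset.smul_sum]
    refine Finset.sum_congr rfl fun i _ => ?_
    rw [Finset.smul_sum]
    refine Finset.sum_congr rfl fun j _ => ?_
    rw [Matrix.smul_apply, smul_eq_mul, Int.cast_mul, mul_smul,
      Int.cast_smul_eq_zsmul ℝ (N i j)]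
    exact (Int.cast_smul_eq_zsmul ℝ r _).symm

lemma exists_rank_factorization {n m : ℕ} (N : Matrix (Fin n) (Fin m) ℤ) :
    ∃ (l : ℕ) (X : Matrix (Fin n) (Fin l) ℤ) (Y : Matrix (Fin l) (Fin m) ℤ)
      (W : Matrix (Fin m) (Fin l) ℤ),
      N = X * Y ∧ Y * W = 1 ∧ LinearIndependent ℤ (fun k (i : Fin n) => X i k) := by
  classical
  set K : Submodule ℤ (Fin n → ℤ) :=
    Submodule.span ℤ (Set.range fun j i => N i j) with hK
  obtain ⟨l, B⟩ := Submodule.basisOfPid (Pi.basisFun ℤ (Fin n)) K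
  have hcol : ∀ j, (fun i => N i j) ∈ K := fun j =>
    Submodule.subset_span (Set.mem_range_self j)
  set X : Matrix (Fin n) (Fin l) ℤ := Matrix.of fun i k => (B k : Fin n → ℤ) i with hX
  set Y : Matrix (Fin l) (Fin m) ℤ :=
    Matrix.of fun k j => B.repr ⟨fun i => N i j, hcol j⟩ k with hY
  -- the columns of X are ℤ-linearly independent
  have hXind : LinearIndependent ℤ (fun k (i : Fin n) => X i k) := by
    have h1 : LinearIndependent ℤ (fun k => ((B k : Fin n → ℤ))) :=
      B.linearIndependent.map' K.subtype K.ker_subtype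
    exact h1
  -- N = X * Y
  have hNXY : N = X * Y := by
    ext i j
    have h := B.sum_repr ⟨fun i => N i j, hcol j⟩
    have h2 : ∑ k, (B.repr ⟨fun i => N i j, hcol j⟩ k) • ((B k : Fin n → ℤ))
        = fun i => N i j := by
      have := congrArg (Submodule.subtype K) h
      rw [map_sum] at this
      simpa only [map_smul, Submodule.subtype_apply, Submodule.coe_smul] using this
    have h3 := congrFun h2 i
    simp only [Finset.sum_apply, Pi.smul_apply, smul_eq_mul] at h3
    rw [Matrix.mul_apply]
    rw [← h3]
    exact Finset.sum_congr rfl fun k _ => mul_comm _ _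
  -- X = N * W
  have hBW : ∀ k, ∃ w : Fin m → ℤ, ∑ j, w j • (fun i => N i j) = (B k : Fin n → ℤ) := by
    intro k
    exact (Submodule.mem_span_range_iff_exists_fun ℤ).mp (by rw [← hK]; exact (B k).2)
  choose w hw using hBW
  set W : Matrix (Fin m) (Fin l) ℤ := Matrix.of fun j k => w k j with hW
  have hXNW : X = N * W := by
    ext i k
    have h := congrFun (hw k) i
    simp only [Finset.sum_apply, Pi.smul_apply, smul_eq_mul] at h
    rw [Matrix.mul_apply, hX]
    simp only [Matrix.of_apply]
    rw [← h]
    exact Finset.sum_congr rfl fun j _ => mul_comm _ _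
  -- Y * W = 1
  have hYW : Y * W = (1 : Matrix (Fin l) (Fin l) ℤ) := by
    have hD : X * (Y * W - (1 : Matrix (Fin l) (Fin l) ℤ)) = 0 := by
      rw [Matrix.mul_sub, Matrix.mul_one, ← Matrix.mul_assoc, ← hNXY, ← hXNW, sub_self]
    have hcols : ∀ k' kk, (Y * W - (1 : Matrix (Fin l) (Fin l) ℤ)) k' kk = 0 := by
      intro k' kk
      have h0 : ∑ k'', (Y * W - (1 : Matrix (Fin l) (Fin l) ℤ)) k'' kk • (fun i => X i k'')
          = (0 : Fin n → ℤ) := by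
        funext i
        have h1 := congrFun (congrFun hD i) kk
        simp only [Matrix.mul_apply, Matrix.zero_apply] at h1
        simp only [Finset.sum_apply, Pi.smul_apply, smul_eq_mul, Pi.zero_apply]
        rw [← h1]
        exact Finset.sum_congr rfl fun k'' _ => mul_comm _ _
      exact Fintype.linearIndependent_iff.mp hXind _ h0 k'
    have hD0 : Y * W - (1 : Matrix (Fin l) (Fin l) ℤ) = 0 := by
      ext a b; exact hcols a b
    exact sub_eq_zero.mp hD0
  exact ⟨l, X, Y, W, hNXY, hYW, hXind⟩

lemma cols_linearIndependent_real {n l : ℕ} {X : Matrix (Fin n) (Fin l) ℤ}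
    (h : LinearIndependent ℤ (fun k (i : Fin n) => X i k)) :
    LinearIndependent ℝ (fun k (i : Fin n) => (X i k : ℝ)) := by
  classical
  set S : Matrix (Fin l) (Fin l) ℤ := Xᵀ * X with hS
  have hdet : S.det ≠ 0 := by
    intro h0
    obtain ⟨v, hv0, hv⟩ := (Matrix.exists_mulVec_eq_zero_iff).mpr h0
    have hXv : X.mulVec v = 0 := by
      have h1 : dotProduct (X.mulVec v) (X.mulVec v) = 0 := by
        calc dotProduct (X.mulVec v) (X.mulVec v)
            = dotProduct v (Xᵀ.mulVec (X.mulVec v)) := by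
              rw [Matrix.dotProduct_mulVec v Xᵀ, Matrix.vecMul_transpose]
          _ = dotProduct v (S.mulVec v) := by rw [Matrix.mulVec_mulVec]
          _ = 0 := by rw [hv]; simp
      funext i
      have h2 : ∑ i, (X.mulVec v i) ^ 2 = 0 := by
        rw [← h1]; simp [dotProduct, sq]
      have h3 := (Finset.sum_eq_zero_iff_of_nonneg (fun i _ => sq_nonneg _)).mp h2 i
        (Finset.mem_univ i)
      exact pow_eq_zero_iff (n := 2) (by norm_num) |>.mp h3
    apply hv0
    funext k
    refine Fintype.linearIndependent_iff.mp h v ?_ k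
    funext i
    have := congrFun hXv i
    simp only [Matrix.mulVec, dotProduct, Pi.zero_apply] at this
    simp only [Finset.sum_apply, Pi.smul_apply, smul_eq_mul, Pi.zero_apply]
    rw [← this]
    exact Finset.sum_congr rfl fun k _ => mul_comm _ _
  -- now over ℝ
  rw [Fintype.linearIndependent_iff]
  intro c hc k
  set Xr : Matrix (Fin n) (Fin l) ℝ := X.map ⇑(Int.castRingHom ℝ) with hXr
  have hXc : Xr.mulVec c = 0 := by
    funext i
    have := congrFun hc i
    simp only [Finset.sum_apply, Pi.smul_apply, smul_eq_mul, Pi.zero_apply] at this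
    simp only [Matrix.mulVec, dotProduct, Pi.zero_apply, hXr, Matrix.map_apply]
    rw [← this]
    exact Finset.sum_congr rfl fun k _ => mul_comm _ _
  have hSr : (Xrᵀ * Xr) = S.map ⇑(Int.castRingHom ℝ) := by
    rw [hS, Matrix.map_mul (f := Int.castRingHom ℝ), Matrix.transpose_map]
  have hdetr : ((Xrᵀ * Xr)).det ≠ 0 := by
    rw [hSr, ← RingHom.mapMatrix_apply, ← RingHom.map_det]
    simpa using hdet
  have h4 : (Xrᵀ * Xr).mulVec c = 0 := by
    rw [← Matrix.mulVec_mulVec, hXc, Matrix.mulVec_zero]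
  have h5 : c = 0 := by
    have hinv := Matrix.nonsing_inv_mul (Xrᵀ * Xr) (isUnit_iff_ne_zero.mpr hdetr)
    calc c = (1 : Matrix (Fin l) (Fin l) ℝ).mulVec c := (Matrix.one_mulVec c).symm
      _ = ((Xrᵀ * Xr)⁻¹ * (Xrᵀ * Xr)).mulVec c := by rw [hinv]
      _ = (Xrᵀ * Xr)⁻¹.mulVec ((Xrᵀ * Xr).mulVec c) := by rw [Matrix.mulVec_mulVec]
      _ = 0 := by rw [h4, Matrix.mulVec_zero]
  exact congrFun h5 k

lemma rows_linearIndependent_real {l m : ℕ} {Y : Matrix (Fin l) (Fin m) ℤ}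
    {W : Matrix (Fin m) (Fin l) ℤ} (h : Y * W = 1) :
    LinearIndependent ℝ (fun k (j : Fin m) => (Y k j : ℝ)) := by
  rw [Fintype.linearIndependent_iff]
  intro c hc k
  set Yr := Y.map ⇑(Int.castRingHom ℝ) with hYr
  set Wr := W.map ⇑(Int.castRingHom ℝ) with hWr
  have h1 : Matrix.vecMul c Yr = 0 := by
    funext j
    have := congrFun hc j
    simp only [Finset.sum_apply, Pi.smul_apply, smul_eq_mul, Pi.zero_apply] at this
    simpa [Matrix.vecMul, dotProduct, hYr, Matrix.map_apply] using this
  have h2 : Yr * Wr = 1 := by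
    rw [hYr, hWr, ← Matrix.map_mul (f := Int.castRingHom ℝ), h]
    simp
  have h3 : c = 0 := by
    calc c = Matrix.vecMul c (Yr * Wr) := by rw [h2, Matrix.vecMul_one]
      _ = Matrix.vecMul (Matrix.vecMul c Yr) Wr := by rw [Matrix.vecMul_vecMul]
      _ = 0 := by rw [h1, Matrix.zero_vecMul]
  exact congrFun h3 k

open scoped MatrixOrder in
noncomputable def Matrix.PosSemidef.sqrt {ι : Type*} [Fintype ι] [DecidableEq ι]
    {A : Matrix ι ι ℝ} (_ : A.PosSemidef) : Matrix ι ι ℝ := CFC.sqrt A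

open scoped MatrixOrder in
lemma Matrix.PosSemidef.posSemidef_sqrt {ι : Type*} [Fintype ι] [DecidableEq ι]
    {A : Matrix ι ι ℝ} (hA : A.PosSemidef) : hA.sqrt.PosSemidef :=
  Matrix.nonneg_iff_posSemidef.mp (CFC.sqrt_nonneg A)

open scoped MatrixOrder in
lemma Matrix.PosSemidef.sqrt_mul_self {ι : Type*} [Fintype ι] [DecidableEq ι]
    {A : Matrix ι ι ℝ} (hA : A.PosSemidef) : hA.sqrt * hA.sqrt = A :=
  CFC.sqrt_mul_sqrt_self A hA.nonneg

/-- Rank-1 case: for semistable unimodular Euclidean lattices `L ⊆ ℝⁿ`, `M ⊆ ℝᵐ`, every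
nonzero `α ∈ L ⊗ M` satisfies `|α| ≥ √(l(α)) ≥ 1`, where `l(α)` is the minimal number of
decomposable tensors needed to write `α`.  The tensor product is realized by a bilinear
map `t` into an inner product space `G` with `⟪t v w, t v' w'⟫ = ⟪v,v'⟫⟪w,w'⟫` and
spanning image, and `L ⊗ M` is the `ℤ`-span of the `t x y` with `x ∈ L`, `y ∈ M`. -/
theorem rank_one_case {n m : ℕ} (hn : 0 < n) (hm : 0 < m)
    {G : Type*} [NormedAddCommGroup G] [InnerProductSpace ℝ G]
    (t : EuclideanSpace ℝ (Fin n) →ₗ[ℝ] EuclideanSpace ℝ (Fin m) →ₗ[ℝ] G)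
    (ht : ∀ (v v' : EuclideanSpace ℝ (Fin n)) (w w' : EuclideanSpace ℝ (Fin m)),
      ⟪t v w, t v' w'⟫ = ⟪v, v'⟫ * ⟪w, w'⟫)
    (htspan : Submodule.span ℝ (Set.image2 (fun v w => t v w) Set.univ Set.univ) = ⊤)
    (bL : Fin n → EuclideanSpace ℝ (Fin n)) (hbL : LinearIndependent ℝ bL)
    (L : Submodule ℤ (EuclideanSpace ℝ (Fin n)))
    (hL : L = Submodule.span ℤ (Set.range bL))
    (hLuni : (gramMatrix bL).det = 1) (hLs : IsSemistableUnimodular L)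
    (bM : Fin m → EuclideanSpace ℝ (Fin m)) (hbM : LinearIndependent ℝ bM)
    (M : Submodule ℤ (EuclideanSpace ℝ (Fin m)))
    (hM : M = Submodule.span ℤ (Set.range bM))
    (hMuni : (gramMatrix bM).det = 1) (hMs : IsSemistableUnimodular M)
    (α : G)
    (hα : α ∈ Submodule.span ℤ
      (Set.image2 (fun x y => t x y) (L : Set (EuclideanSpace ℝ (Fin n)))
        (M : Set (EuclideanSpace ℝ (Fin m)))))
    (hα0 : α ≠ 0) :
    1 ≤ ‖α‖ ∧
      Real.sqrt ((sInf {l : ℕ | ∃ (u : Fin l → EuclideanSpace ℝ (Fin n))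
        (u' : Fin l → EuclideanSpace ℝ (Fin m)), α = ∑ k, t (u k) (u' k)} : ℕ) : ℝ) ≤ ‖α‖ := by
  classical
  -- obtain an integer coefficient matrix
  obtain ⟨N, hN⟩ := exists_int_matrix t bL bM (by rw [hL, hM] at hα; exact hα)
  obtain ⟨l, X, Y, W, hNXY, hYW, hXind⟩ := exists_rank_factorization N
  -- the lattice vectors
  set x : Fin l → EuclideanSpace ℝ (Fin n) := fun k => ∑ i, (X i k : ℝ) • bL i with hx
  set y : Fin l → EuclideanSpace ℝ (Fin m) := fun k => ∑ j, (Y k j : ℝ) • bM j with hy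
  have hxL : ∀ k, x k ∈ L := by
    intro k
    refine Submodule.sum_mem L fun i _ => ?_
    rw [Int.cast_smul_eq_zsmul]
    exact Submodule.smul_mem L (X i k) (hL ▸ Submodule.subset_span (Set.mem_range_self i))
  have hyM : ∀ k, y k ∈ M := by
    intro k
    refine Submodule.sum_mem M fun j _ => ?_
    rw [Int.cast_smul_eq_zsmul]
    exact Submodule.smul_mem M (Y k j) (hM ▸ Submodule.subset_span (Set.mem_range_self j))
  -- bases
  haveI : Nonempty (Fin n) := ⟨⟨0, hn⟩⟩
  haveI : Nonempty (Fin m) := ⟨⟨0, hm⟩⟩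
  have hcardn : Fintype.card (Fin n) = Module.finrank ℝ (EuclideanSpace ℝ (Fin n)) := by simp
  have hcardm : Fintype.card (Fin m) = Module.finrank ℝ (EuclideanSpace ℝ (Fin m)) := by simp
  let BL : Module.Basis (Fin n) ℝ (EuclideanSpace ℝ (Fin n)) :=
    basisOfLinearIndependentOfCardEqFinrank hbL hcardn
  let BM : Module.Basis (Fin m) ℝ (EuclideanSpace ℝ (Fin m)) :=
    basisOfLinearIndependentOfCardEqFinrank hbM hcardm
  have hBL : ⇑BL = bL := coe_basisOfLinearIndependentOfCardEqFinrank hbL hcardn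
  have hBM : ⇑BM = bM := coe_basisOfLinearIndependentOfCardEqFinrank hbM hcardm
  -- linear independence of x and y
  have hxind : LinearIndependent ℝ x := by
    have h1 := (cols_linearIndependent_real hXind).map'
      BL.equivFun.symm.toLinearMap BL.equivFun.symm.ker
    have h2 : x = (⇑BL.equivFun.symm ∘ fun k (i : Fin n) => (X i k : ℝ)) := by
      funext k
      rw [hx]
      simp only [Function.comp_apply, Module.Basis.equivFun_symm_apply, hBL]
    rwa [h2]
  have hyind : LinearIndependent ℝ y := by
    have h1 := (rows_linearIndependent_real hYW).map'
      BM.equivFun.symm.toLinearMap BM.equivFun.symm.ker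
    have h2 : y = (⇑BM.equivFun.symm ∘ fun k (j : Fin m) => (Y k j : ℝ)) := by
      funext k
      rw [hy]
      simp only [Function.comp_apply, Module.Basis.equivFun_symm_apply, hBM]
    rwa [h2]
  -- the decomposition of α
  have hdecomp : α = ∑ k, t (x k) (y k) := by
    rw [hN]
    have hterm : ∀ k, t (x k) (y k)
        = ∑ i, ∑ j, ((X i k : ℝ) * (Y k j : ℝ)) • t (bL i) (bM j) := by
      intro k
      rw [hx, hy]
      simp only [map_sum, LinearMap.sum_apply, LinearMap.map_smul, LinearMap.smul_apply,
        Finset.smul_sum]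
      rw [Finset.sum_comm]
      refine Finset.sum_congr rfl fun i _ => Finset.sum_congr rfl fun j _ => ?_
      rw [smul_smul]
    symm
    calc ∑ k, t (x k) (y k)
        = ∑ k, ∑ i, ∑ j, ((X i k : ℝ) * (Y k j : ℝ)) • t (bL i) (bM j) :=
          Finset.sum_congr rfl fun k _ => hterm k
      _ = ∑ i, ∑ k, ∑ j, ((X i k : ℝ) * (Y k j : ℝ)) • t (bL i) (bM j) := Finset.sum_comm
      _ = ∑ i, ∑ j, ∑ k, ((X i k : ℝ) * (Y k j : ℝ)) • t (bL i) (bM j) :=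
          Finset.sum_congr rfl fun i _ => Finset.sum_comm
      _ = ∑ i, ∑ j, ((N i j : ℝ)) • t (bL i) (bM j) := by
          refine Finset.sum_congr rfl fun i _ => Finset.sum_congr rfl fun j _ => ?_
          rw [← Finset.sum_smul]
          congr 1
          rw [hNXY, Matrix.mul_apply]
          push_cast
          rfl
  -- positivity of l
  have hl : 0 < l := by
    rcases Nat.eq_zero_or_pos l with h0 | h0
    · exfalso
      apply hα0
      subst h0
      have hN0 : N = 0 := by
        rw [hNXY]
        ext i j
        rw [Matrix.mul_apply]
        simp
      rw [hN, hN0]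
      simp
    · exact h0
  -- Gram matrices
  have hdetA : 1 ≤ (gramMatrix x).det := hLs l x hxL hxind
  have hdetB : 1 ≤ (gramMatrix y).det := hMs l y hyM hyind
  set A := gramMatrix x with hA
  set B := gramMatrix y with hB
  -- norm squared as trace
  have hnorm : ‖α‖ ^ 2 = (A * B).trace := by
    calc ‖α‖ ^ 2 = ∑ k, ∑ k', ⟪x k, x k'⟫ * ⟪y k, y k'⟫ := by
          rw [← real_inner_self_eq_norm_sq, hdecomp, sum_inner]
          refine Finset.sum_congr rfl fun k _ => ?_
          rw [inner_sum]
          exact Finset.sum_congr rfl fun k' _ => ht _ _ _ _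
      _ = (A * B).trace := by
          rw [Matrix.trace]
          refine (Finset.sum_congr rfl fun k _ => ?_).symm
          rw [Matrix.diag_apply, Matrix.mul_apply]
          refine (Finset.sum_congr rfl fun k' _ => ?_).symm
          rw [hA, hB]
          simp only [gramMatrix, Matrix.of_apply]
          rw [real_inner_comm (y k') (y k)]
  -- the key inequality
  have hkey : (l : ℝ) ≤ ‖α‖ ^ 2 := by
    rw [hnorm]
    have hApsd : A.PosSemidef := gram_posSemidef x
    have hBpsd : B.PosSemidef := gram_posSemidef y
    have hS := hApsd.posSemidef_sqrt
    have hCpsd : (hApsd.sqrt * B * hApsd.sqrt).PosSemidef := by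
      have h1 := hBpsd.mul_mul_conjTranspose_same hApsd.sqrt
      rwa [hS.1] at h1
    have hCdet : 1 ≤ (hApsd.sqrt * B * hApsd.sqrt).det := by
      rw [Matrix.det_mul, Matrix.det_mul]
      have h2 : hApsd.sqrt.det * hApsd.sqrt.det = A.det := by
        rw [← Matrix.det_mul, hApsd.sqrt_mul_self]
      nlinarith [hdetA, hdetB]
    have htr : (hApsd.sqrt * B * hApsd.sqrt).trace = (A * B).trace := by
      rw [Matrix.trace_mul_cycle, hApsd.sqrt_mul_self]
    rw [← htr]
    exact aux_le_trace hl hCpsd hCdet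
  have hone : (1 : ℝ) ≤ (l : ℝ) := by exact_mod_cast hl
  have hnormge : 1 ≤ ‖α‖ := by nlinarith [norm_nonneg α]
  refine ⟨hnormge, ?_⟩
  have hmem : l ∈ {l : ℕ | ∃ (u : Fin l → EuclideanSpace ℝ (Fin n))
      (u' : Fin l → EuclideanSpace ℝ (Fin m)), α = ∑ k, t (u k) (u' k)} := ⟨x, y, hdecomp⟩
  have hsinf : sInf {l : ℕ | ∃ (u : Fin l → EuclideanSpace ℝ (Fin n))
      (u' : Fin l → EuclideanSpace ℝ (Fin m)), α = ∑ k, t (u k) (u' k)} ≤ l :=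
    Nat.sInf_le hmem
  calc Real.sqrt ((sInf {l : ℕ | ∃ (u : Fin l → EuclideanSpace ℝ (Fin n))
        (u' : Fin l → EuclideanSpace ℝ (Fin m)), α = ∑ k, t (u k) (u' k)} : ℕ) : ℝ)
      ≤ Real.sqrt (l : ℝ) := Real.sqrt_le_sqrt (by exact_mod_cast hsinf)
    _ ≤ Real.sqrt (‖α‖ ^ 2) := Real.sqrt_le_sqrt hkey
    _ = ‖α‖ := Real.sqrt_sq (norm_nonneg α)
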